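/- Let n ≥ 1 and 0 ≤ β < α ≤ 1, and consider single participation (k = 1, b = n). Define 𝓔 = (1/√n) · sens_{1,n}(C_{α,β}) · ‖C_{α,β}‖_F. If α < 1, then 1 ≤ 𝓔 ≤ (1/(α − β)²)·log(1/(1 − α²)). If α = 1, then max{1, (log(n+1) − 1)/4} ≤ 𝓔 ≤ (1 + log n)/(1 − β)². Here log denotes the natural logarithm. -/

import Mathlib

open Finset Matrix

/-- `r_m = (1/4^m)·C(2m,m)`. -/
noncomputable def rCoef (m : ℕ) : ℝ := (1 / 4 ^ m) * (Nat.choose (2 * m) m : ℝ)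

/-- `c_m = Σ_{i=0}^{m} α^{m−i} r_{m−i} r_i β^i`. -/
noncomputable def cCoef (α β : ℝ) (m : ℕ) : ℝ :=
  ∑ i ∈ Finset.range (m + 1), α ^ (m - i) * rCoef (m - i) * rCoef i * β ^ i

/-- The square root factor `C_{α,β}`, lower triangular Toeplitz with entries `c_{i-j}`. -/
noncomputable def Cmat (n : ℕ) (α β : ℝ) : Matrix (Fin n) (Fin n) ℝ :=
  Matrix.of fun i j => if (j : ℕ) ≤ (i : ℕ) then cCoef α β ((i : ℕ) - (j : ℕ)) else 0

/-- The `b`-min-separated `L2`-sensitivity with at most `k` participations. -/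
noncomputable def sens (n b k : ℕ) (C : Matrix (Fin n) (Fin n) ℝ) : ℝ :=
  Real.sqrt (sSup { x : ℝ | ∃ π : Finset (Fin n), π.card ≤ k ∧
    (∀ i ∈ π, ∀ j ∈ π, i ≠ j → b ≤ Nat.dist (i : ℕ) (j : ℕ)) ∧
    x = ∑ i ∈ π, ∑ j ∈ π, (Cᵀ * C) i j })

/-- The Frobenius norm. -/
noncomputable def frob (n : ℕ) (C : Matrix (Fin n) (Fin n) ℝ) : ℝ :=
  Real.sqrt (∑ i : Fin n, ∑ j : Fin n, (C i j) ^ 2)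


/-!
Column `j` of `C_{α,β}` holds `c_0, …, c_{n-1-j}`, so the sensitivity is the norm of the first
column, `√S` with `S = Σ_{d<n} c_d²`, and `‖C‖_F² = Σ_{m=1}^{n} Σ_{d<m} c_d²` lies between `n` and
`n S`; hence `1 ≤ 𝓔 ≤ S`. Vandermonde's identity gives `r_a r_b ≤ r_{a+b}`, hence
`(α - β) c_m ≤ α^{m+1} r_m`, and with `r_m² ≤ 1/(m+1)` the sum `(α - β)² S` is dominated by
`Σ_{m ≥ 1} α^{2m}/m = log (1/(1 - α²))`, or by `H_n ≤ 1 + log n` when `α = 1`.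
For the lower bound at `α = 1`, `c_m ≥ r_m` and `r_m² ≥ 1/(4m+1)` give `S ≥ H_n/4` and
`‖C‖_F² ≥ Σ_{m=1}^{n} H_m/4 = ((n+1) H_n - n)/4`, so `𝓔 ≥ (H_n - 1)/4 ≥ (log (n+1) - 1)/4`.
-/

lemma Nat.centralBinom_mul_centralBinom_le (a b : ℕ) :
    a.centralBinom * b.centralBinom ≤ (a + b).centralBinom := by
  simp only [Nat.centralBinom_eq_two_mul_choose, mul_add, Nat.add_choose_eq]
  exact single_le_sum (f := fun ij : ℕ × ℕ => (2 * a).choose ij.1 * (2 * b).choose ij.2)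
    (fun _ _ => Nat.zero_le _) (a := (a, b)) (HasAntidiagonal.mem_antidiagonal.mpr rfl)

lemma rCoef_eq (m : ℕ) : rCoef m = m.centralBinom / 4 ^ m := by
  rw [rCoef, Nat.centralBinom_eq_two_mul_choose, one_div_mul_eq_div]

lemma rCoef_nonneg (m : ℕ) : 0 ≤ rCoef m := by unfold rCoef; positivity

lemma rCoef_zero : rCoef 0 = 1 := by simp [rCoef]

lemma rCoef_succ (m : ℕ) : rCoef (m + 1) = rCoef m * ((2 * m + 1) / (2 * m + 2)) := by
  have h : ((m : ℝ) + 1) * (m + 1).centralBinom = 2 * (2 * m + 1) * m.centralBinom := by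
    exact_mod_cast Nat.succ_mul_centralBinom_succ m
  rw [rCoef_eq, rCoef_eq, pow_succ]
  field_simp
  linear_combination 2 * h

lemma rCoef_mul_rCoef_le (a b : ℕ) : rCoef a * rCoef b ≤ rCoef (a + b) := by
  have h : (a.centralBinom : ℝ) * b.centralBinom ≤ (a + b).centralBinom := by
    exact_mod_cast Nat.centralBinom_mul_centralBinom_le a b
  rw [rCoef_eq, rCoef_eq, rCoef_eq, pow_add, div_mul_div_comm]
  gcongr

lemma rCoef_sq_le (m : ℕ) : rCoef m ^ 2 ≤ 1 / (m + 1) := by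
  rw [le_div_iff₀ (by positivity), mul_comm]
  induction m with
  | zero => simp [rCoef_zero]
  | succ m ih =>
    have h : ((m : ℝ) + 2) * (2 * m + 1) ^ 2 ≤ ((m : ℝ) + 1) * (2 * m + 2) ^ 2 := by nlinarith
    calc ((m + 1 : ℕ) + 1 : ℝ) * rCoef (m + 1) ^ 2
        = (m + 2) * (2 * m + 1) ^ 2 / (2 * m + 2) ^ 2 * rCoef m ^ 2 := by
          rw [rCoef_succ, mul_pow, div_pow]; push_cast; ring
      _ ≤ (m + 1) * rCoef m ^ 2 := by
          gcongr; rw [div_le_iff₀ (by positivity)]; exact h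
      _ ≤ 1 := ih

lemma one_div_le_rCoef_sq (m : ℕ) : 1 / (4 * m + 1) ≤ rCoef m ^ 2 := by
  rw [div_le_iff₀ (by positivity), mul_comm]
  induction m with
  | zero => simp [rCoef_zero]
  | succ m ih =>
    have h : (4 * (m : ℝ) + 1) * (2 * m + 2) ^ 2 ≤ (4 * m + 5) * (2 * m + 1) ^ 2 := by nlinarith
    calc (1 : ℝ) ≤ (4 * m + 1) * rCoef m ^ 2 := ih
      _ ≤ (4 * m + 5) * (2 * m + 1) ^ 2 / (2 * m + 2) ^ 2 * rCoef m ^ 2 := by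
          gcongr; rw [le_div_iff₀ (by positivity)]; exact h
      _ = (4 * (m + 1 : ℕ) + 1) * rCoef (m + 1) ^ 2 := by
          rw [rCoef_succ, mul_pow, div_pow]; push_cast; ring

lemma cCoef_zero (α β : ℝ) : cCoef α β 0 = 1 := by simp [cCoef, rCoef_zero]

lemma cCoef_nonneg {α β : ℝ} (hα : 0 ≤ α) (hβ : 0 ≤ β) (m : ℕ) : 0 ≤ cCoef α β m :=
  sum_nonneg fun i _ => by have := rCoef_nonneg (m - i); have := rCoef_nonneg i; positivity

lemma rCoef_le_cCoef_one {β : ℝ} (hβ : 0 ≤ β) (m : ℕ) : rCoef m ≤ cCoef 1 β m := by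
  simpa [rCoef_zero, cCoef] using single_le_sum
    (f := fun i => (1 : ℝ) ^ (m - i) * rCoef (m - i) * rCoef i * β ^ i)
    (fun i _ => by have := rCoef_nonneg (m - i); have := rCoef_nonneg i; positivity)
    (mem_range.mpr m.succ_pos)

lemma sub_mul_cCoef_le {α β : ℝ} (hβ : 0 ≤ β) (hβα : β ≤ α) (m : ℕ) :
    (α - β) * cCoef α β m ≤ α ^ (m + 1) * rCoef m := by
  have hterm : ∀ i ∈ range (m + 1), α ^ (m - i) * rCoef (m - i) * rCoef i * β ^ i ≤
      rCoef m * (β ^ i * α ^ (m + 1 - 1 - i)) := by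
    intro i hi
    have hr := rCoef_mul_rCoef_le (m - i) i
    rw [Nat.sub_add_cancel (mem_range_succ_iff.mp hi)] at hr
    calc α ^ (m - i) * rCoef (m - i) * rCoef i * β ^ i
        = (rCoef (m - i) * rCoef i) * (β ^ i * α ^ (m - i)) := by ring
      _ ≤ rCoef m * (β ^ i * α ^ (m + 1 - 1 - i)) := by
        have hα : 0 ≤ α := hβ.trans hβα
        rw [Nat.add_sub_cancel]; gcongr
  have hgeom := geom_sum₂_mul β α (m + 1)
  calc (α - β) * cCoef α β m
      ≤ (α - β) * (rCoef m * ∑ i ∈ range (m + 1), β ^ i * α ^ (m + 1 - 1 - i)) := by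
        have := sub_nonneg.mpr hβα
        rw [mul_sum]; gcongr; exact sum_le_sum hterm
    _ = rCoef m * (α ^ (m + 1) - β ^ (m + 1)) := by linear_combination (-rCoef m) * hgeom
    _ ≤ α ^ (m + 1) * rCoef m := by nlinarith [rCoef_nonneg m, pow_nonneg hβ (m + 1)]

lemma sub_sq_mul_cCoef_sq_le {α β : ℝ} (hβ : 0 ≤ β) (hβα : β ≤ α) (m : ℕ) :
    (α - β) ^ 2 * cCoef α β m ^ 2 ≤ (α ^ 2) ^ (m + 1) / (m + 1) := by
  have h0 : 0 ≤ (α - β) * cCoef α β m :=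
    mul_nonneg (sub_nonneg.mpr hβα) (cCoef_nonneg (hβ.trans hβα) hβ m)
  calc (α - β) ^ 2 * cCoef α β m ^ 2 = ((α - β) * cCoef α β m) ^ 2 := by ring
    _ ≤ (α ^ (m + 1) * rCoef m) ^ 2 := pow_le_pow_left₀ h0 (sub_mul_cCoef_le hβ hβα m) 2
    _ = (α ^ 2) ^ (m + 1) * rCoef m ^ 2 := by ring
    _ ≤ (α ^ 2) ^ (m + 1) * (1 / (m + 1)) := by gcongr; exact rCoef_sq_le m
    _ = (α ^ 2) ^ (m + 1) / (m + 1) := mul_one_div _ _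

lemma one_le_harmonic {n : ℕ} (hn : 0 < n) : 1 ≤ harmonic n := by
  simpa [harmonic] using
    single_le_sum (f := fun i : ℕ => ((i + 1 : ℕ) : ℚ)⁻¹) (fun i _ => by positivity)
      (mem_range.mpr hn)

lemma sum_range_harmonic_succ (n : ℕ) :
    ∑ m ∈ range n, harmonic (m + 1) = (n + 1) * harmonic n - n := by
  induction n with
  | zero => simp
  | succ n ih =>
    rw [sum_range_succ, ih, harmonic_succ]
    push_cast
    field_simp
    ring

noncomputable def cCoefSqSum (α β : ℝ) (m : ℕ) : ℝ := ∑ d ∈ range m, cCoef α β d ^ 2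

lemma cCoefSqSum_nonneg (α β : ℝ) (m : ℕ) : 0 ≤ cCoefSqSum α β m :=
  sum_nonneg fun _ _ => sq_nonneg _

lemma cCoefSqSum_mono (α β : ℝ) : Monotone (cCoefSqSum α β) :=
  monotone_nat_of_le_succ fun m => by
    rw [cCoefSqSum, cCoefSqSum, sum_range_succ]
    exact le_add_of_nonneg_right (sq_nonneg _)

lemma one_le_cCoefSqSum (α β : ℝ) {m : ℕ} (hm : 0 < m) : 1 ≤ cCoefSqSum α β m :=
  calc (1 : ℝ) = cCoefSqSum α β 1 := by simp [cCoefSqSum, cCoef_zero]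
    _ ≤ cCoefSqSum α β m := cCoefSqSum_mono α β hm

lemma sub_sq_mul_cCoefSqSum_le_log {α β : ℝ} (hβ : 0 ≤ β) (hβα : β ≤ α) (hα : α < 1) (m : ℕ) :
    (α - β) ^ 2 * cCoefSqSum α β m ≤ Real.log (1 / (1 - α ^ 2)) := by
  have hα2 : |α ^ 2| < 1 := by rw [abs_of_nonneg (sq_nonneg α)]; nlinarith
  rw [cCoefSqSum, mul_sum, one_div, Real.log_inv]
  exact (sum_le_sum fun d _ => sub_sq_mul_cCoef_sq_le hβ hβα d).trans
    (sum_le_hasSum _ (fun d _ => by positivity) (Real.hasSum_pow_div_log_of_abs_lt_one hα2))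

lemma one_sub_sq_mul_cCoefSqSum_one_le_harmonic {β : ℝ} (hβ : 0 ≤ β) (hβ1 : β ≤ 1) (m : ℕ) :
    (1 - β) ^ 2 * cCoefSqSum 1 β m ≤ harmonic m := by
  rw [cCoefSqSum, mul_sum, harmonic]
  push_cast
  exact sum_le_sum fun d _ => by simpa using sub_sq_mul_cCoef_sq_le hβ hβ1 d

lemma harmonic_div_four_le_cCoefSqSum_one {β : ℝ} (hβ : 0 ≤ β) (m : ℕ) :
    (harmonic m : ℝ) / 4 ≤ cCoefSqSum 1 β m := by
  rw [cCoefSqSum, harmonic]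
  push_cast
  rw [sum_div]
  refine sum_le_sum fun d _ => ?_
  calc ((d : ℝ) + 1)⁻¹ / 4 = 1 / (4 * d + 4) := by field_simp
    _ ≤ 1 / (4 * d + 1) := one_div_le_one_div_of_le (by positivity) (by linarith)
    _ ≤ rCoef d ^ 2 := one_div_le_rCoef_sq d
    _ ≤ cCoef 1 β d ^ 2 := pow_le_pow_left₀ (rCoef_nonneg d) (rCoef_le_cCoef_one hβ d) 2

lemma sens_one_eq_of_forall_le {n b : ℕ} (C : Matrix (Fin n) (Fin n) ℝ) (j : Fin n)
    (hj : ∀ i, (Cᵀ * C) i i ≤ (Cᵀ * C) j j) : sens n b 1 C = √((Cᵀ * C) j j) := by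
  have : Nonempty (Fin n) := ⟨j⟩
  have hj0 : 0 ≤ (Cᵀ * C) j j := by
    simpa only [mul_apply, transpose_apply] using sum_nonneg fun k _ => mul_self_nonneg (C k j)
  unfold sens
  congr 1
  refine IsGreatest.csSup_eq ⟨⟨{j}, by simp, by simp, by simp⟩, ?_⟩
  rintro x ⟨π, hcard, -, rfl⟩
  obtain ⟨i, hi⟩ := card_le_one_iff_subset_singleton.mp hcard
  rcases subset_singleton_iff.mp hi with rfl | rfl
  · simpa using hj0
  · simpa using hj i

lemma frob_eq_sqrt_sum_transpose_mul_self {n : ℕ} (C : Matrix (Fin n) (Fin n) ℝ) :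
    frob n C = √(∑ j, (Cᵀ * C) j j) := by
  rw [frob, sum_comm]
  simp [mul_apply, sq]

lemma transpose_mul_self_Cmat_apply_self (n : ℕ) (α β : ℝ) (j : Fin n) :
    ((Cmat n α β)ᵀ * Cmat n α β) j j = cCoefSqSum α β (n - j) := by
  calc ((Cmat n α β)ᵀ * Cmat n α β) j j
      = ∑ k ∈ range n, if (j : ℕ) ≤ k then cCoef α β (k - j) ^ 2 else 0 := by
        rw [← Fin.sum_univ_eq_sum_range (fun k => if (j : ℕ) ≤ k then cCoef α β (k - j) ^ 2 else 0)]
        simp only [mul_apply, transpose_apply, Cmat, of_apply]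
        refine sum_congr rfl fun k _ => ?_
        split_ifs <;> ring
    _ = ∑ k ∈ Ico (j : ℕ) n, cCoef α β (k - j) ^ 2 := by
        rw [← sum_filter, range_eq_Ico, Ico_filter_le, max_eq_right (Nat.zero_le _)]
    _ = cCoefSqSum α β (n - j) := by
        rw [sum_Ico_eq_sum_range]
        simp [cCoefSqSum]

lemma sens_Cmat {n : ℕ} (hn : 0 < n) (α β : ℝ) :
    sens n n 1 (Cmat n α β) = √(cCoefSqSum α β n) := by
  rw [sens_one_eq_of_forall_le _ ⟨0, hn⟩ fun i => ?_]
  · simp [transpose_mul_self_Cmat_apply_self]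
  · simp only [transpose_mul_self_Cmat_apply_self]
    exact cCoefSqSum_mono α β (by omega)

lemma frob_Cmat (n : ℕ) (α β : ℝ) :
    frob n (Cmat n α β) = √(∑ m ∈ range n, cCoefSqSum α β (m + 1)) := by
  rw [frob_eq_sqrt_sum_transpose_mul_self]
  simp only [transpose_mul_self_Cmat_apply_self]
  rw [Fin.sum_univ_eq_sum_range (fun j => cCoefSqSum α β (n - j)), ← sum_range_reflect]
  congr 1
  refine sum_congr rfl fun m hm => ?_
  have := mem_range.mp hm
  congr 1
  omega

noncomputable def approxError (n : ℕ) (α β : ℝ) : ℝ :=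
  √(cCoefSqSum α β n * (∑ m ∈ range n, cCoefSqSum α β (m + 1)) / n)

lemma one_div_sqrt_mul_sens_mul_frob_Cmat {n : ℕ} (hn : 0 < n) (α β : ℝ) :
    1 / √n * sens n n 1 (Cmat n α β) * frob n (Cmat n α β) = approxError n α β := by
  rw [sens_Cmat hn, frob_Cmat, approxError, Real.sqrt_div' _ (Nat.cast_nonneg n),
    Real.sqrt_mul (cCoefSqSum_nonneg α β n)]
  ring

lemma one_le_approxError {n : ℕ} (hn : 0 < n) (α β : ℝ) : 1 ≤ approxError n α β := by
  rw [approxError, Real.one_le_sqrt, le_div_iff₀ (by positivity), one_mul]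
  calc (n : ℝ) = 1 * ∑ _m ∈ range n, 1 := by simp
    _ ≤ cCoefSqSum α β n * ∑ m ∈ range n, cCoefSqSum α β (m + 1) :=
      mul_le_mul (one_le_cCoefSqSum α β hn)
        (sum_le_sum fun m _ => one_le_cCoefSqSum α β m.succ_pos) (by positivity)
        (cCoefSqSum_nonneg α β n)

lemma approxError_le_cCoefSqSum {n : ℕ} (hn : 0 < n) (α β : ℝ) :
    approxError n α β ≤ cCoefSqSum α β n := by
  have hS := cCoefSqSum_nonneg α β n
  rw [approxError, Real.sqrt_le_left hS, div_le_iff₀ (by positivity)]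
  calc cCoefSqSum α β n * ∑ m ∈ range n, cCoefSqSum α β (m + 1)
      ≤ cCoefSqSum α β n * ∑ _m ∈ range n, cCoefSqSum α β n := by
        gcongr with m hm
        exact cCoefSqSum_mono α β (mem_range.mp hm)
    _ = cCoefSqSum α β n ^ 2 * n := by simp only [sum_const, card_range, nsmul_eq_mul]; ring

lemma harmonic_sub_one_div_four_le_approxError {n : ℕ} (hn : 0 < n) {β : ℝ} (hβ : 0 ≤ β) :
    ((harmonic n : ℝ) - 1) / 4 ≤ approxError n 1 β := by
  have hH : (1 : ℝ) ≤ harmonic n := by exact_mod_cast one_le_harmonic hn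
  have hsum : ∑ m ∈ range n, (harmonic (m + 1) : ℝ) = (n + 1) * harmonic n - n := by
    exact_mod_cast sum_range_harmonic_succ n
  set H : ℝ := (harmonic n : ℝ)
  have hS : H / 4 ≤ cCoefSqSum 1 β n := harmonic_div_four_le_cCoefSqSum_one hβ n
  have hT : n * (H - 1) / 4 ≤ ∑ m ∈ range n, cCoefSqSum 1 β (m + 1) :=
    calc n * (H - 1) / 4 ≤ ((n + 1) * H - n) / 4 := by linarith
      _ = ∑ m ∈ range n, (harmonic (m + 1) : ℝ) / 4 := by rw [← sum_div, hsum]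
      _ ≤ ∑ m ∈ range n, cCoefSqSum 1 β (m + 1) :=
        sum_le_sum fun m _ => harmonic_div_four_le_cCoefSqSum_one hβ (m + 1)
  have hTS : 0 ≤ cCoefSqSum 1 β n * ∑ m ∈ range n, cCoefSqSum 1 β (m + 1) :=
    mul_nonneg (cCoefSqSum_nonneg 1 β n) (sum_nonneg fun m _ => cCoefSqSum_nonneg 1 β (m + 1))
  rw [approxError, Real.le_sqrt (by linarith) (div_nonneg hTS n.cast_nonneg),
    le_div_iff₀ (by positivity)]
  calc ((H - 1) / 4) ^ 2 * n ≤ H / 4 * (n * (H - 1) / 4) := by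
        nlinarith [mul_nonneg (Nat.cast_nonneg (α := ℝ) n) (sub_nonneg.mpr hH)]
    _ ≤ _ := mul_le_mul hS hT (by positivity) (by linarith)

theorem approximation_error_single_participation_general (n : ℕ) (hn : 1 ≤ n) (α β : ℝ)
    (hβ : 0 ≤ β) (hβα : β < α) :
    (α < 1 →
      1 ≤ (1 / Real.sqrt n) * sens n n 1 (Cmat n α β) * frob n (Cmat n α β) ∧
        (1 / Real.sqrt n) * sens n n 1 (Cmat n α β) * frob n (Cmat n α β) ≤
          (1 / (α - β) ^ 2) * Real.log (1 / (1 - α ^ 2))) ∧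
    (α = 1 →
      max 1 ((Real.log (n + 1) - 1) / 4) ≤
          (1 / Real.sqrt n) * sens n n 1 (Cmat n α β) * frob n (Cmat n α β) ∧
        (1 / Real.sqrt n) * sens n n 1 (Cmat n α β) * frob n (Cmat n α β) ≤
          (1 + Real.log n) / (1 - β) ^ 2) := by
  rw [one_div_sqrt_mul_sens_mul_frob_Cmat hn]
  have hsub : 0 < (α - β) ^ 2 := by nlinarith
  refine ⟨fun hα1 => ⟨one_le_approxError hn α β, (approxError_le_cCoefSqSum hn α β).trans ?_⟩,
    ?_⟩
  · rw [one_div_mul_eq_div, le_div_iff₀ hsub, mul_comm]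
    exact sub_sq_mul_cCoefSqSum_le_log hβ hβα.le hα1 n
  · rintro rfl
    refine ⟨max_le (one_le_approxError hn 1 β)
      ((harmonic_sub_one_div_four_le_approxError hn hβ).trans' ?_),
      (approxError_le_cCoefSqSum hn 1 β).trans ?_⟩
    · gcongr
      exact_mod_cast log_add_one_le_harmonic n
    · rw [le_div_iff₀ hsub, mul_comm]
      exact (one_sub_sq_mul_cCoefSqSum_one_le_harmonic hβ hβα.le n).trans
        (harmonic_le_one_add_log n)

/-- bounds on the expected approximation error of the square root
factorization in the single participation setting (`k = 1`, `b = n`). -/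
theorem approximation_error_single_participation (n : ℕ) (hn : 1 ≤ n) (α β : ℝ)
    (hβ : 0 ≤ β) (hβα : β < α) (hα : α ≤ 1) :
    (α < 1 →
      1 ≤ (1 / Real.sqrt n) * sens n n 1 (Cmat n α β) * frob n (Cmat n α β) ∧
        (1 / Real.sqrt n) * sens n n 1 (Cmat n α β) * frob n (Cmat n α β) ≤
          (1 / (α - β) ^ 2) * Real.log (1 / (1 - α ^ 2))) ∧
    (α = 1 →
      max 1 ((Real.log (n + 1) - 1) / 4) ≤
          (1 / Real.sqrt n) * sens n n 1 (Cmat n α β) * frob n (Cmat n α β) ∧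
        (1 / Real.sqrt n) * sens n n 1 (Cmat n α β) * frob n (Cmat n α β) ≤
          (1 + Real.log n) / (1 - β) ^ 2) :=
  approximation_error_single_participation_general n hn α β hβ hβα
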